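/- arXiv:1811.02876 — 2 statements merged into one kernel-verified Lean document; each statement's English description precedes it below -/
import Mathlib

section
/- Let d be a positive integer with d ≡ 0 or 2 (mod 6). Then there exist x, y ∈ L_d with (x.x) = (y.y) = 0 and (x.y) = 1 (an embedding of the hyperbolic plane U into L_d, automatically primitive) if and only if there exist coprime integers a, b with 2(a² − ab + b²) = d (i.e. d is primitively represented by the lattice A₂). -/
open scoped BigOperators

noncomputable section

/-- The negative definite `E₈` Gram matrix. -/
def E8M : Matrix (Fin 8) (Fin 8) ℤ := - CartanMatrix.E₈

/-- The Gram matrix of the Mukai lattice `Λ̃ = E₈(-1)² ⊕ U₁ ⊕ U₂ ⊕ U₃ ⊕ U₄` on `ℤ²⁴`,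
where the last hyperbolic summand `U₄` carries the sign-changed pairing `(e₄.f₄) = -1`. -/
def gramM : Fin 24 → Fin 24 → ℤ := fun i j =>
  if i.val < 8 ∧ j.val < 8 then
    E8M ⟨i.val % 8, Nat.mod_lt _ (by norm_num)⟩ ⟨j.val % 8, Nat.mod_lt _ (by norm_num)⟩
  else if 8 ≤ i.val ∧ i.val < 16 ∧ 8 ≤ j.val ∧ j.val < 16 then
    E8M ⟨(i.val - 8) % 8, Nat.mod_lt _ (by norm_num)⟩ ⟨(j.val - 8) % 8, Nat.mod_lt _ (by norm_num)⟩
  else if (i.val = 16 ∧ j.val = 17) ∨ (i.val = 17 ∧ j.val = 16) ∨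
      (i.val = 18 ∧ j.val = 19) ∨ (i.val = 19 ∧ j.val = 18) ∨
      (i.val = 20 ∧ j.val = 21) ∨ (i.val = 21 ∧ j.val = 20) then 1
  else if (i.val = 22 ∧ j.val = 23) ∨ (i.val = 23 ∧ j.val = 22) then -1
  else 0

/-- The bilinear (Mukai) form of the lattice `Λ̃`. -/
def MB (x y : Fin 24 → ℤ) : ℤ := ∑ i, ∑ j, gramM i j * x i * y j

/-- `λ₁ = e₄ - f₄`. -/
def l1 : Fin 24 → ℤ := Pi.single 22 1 - Pi.single 23 1

/-- `λ₂ = e₃ + f₃ + f₄`. -/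
def l2 : Fin 24 → ℤ := Pi.single 20 1 + Pi.single 21 1 + Pi.single 23 1

/-- `μ₁ = e₃ - f₃`. -/
def m1 : Fin 24 → ℤ := Pi.single 20 1 - Pi.single 21 1

/-- `μ₂ = -e₃ - e₄ - f₄`. -/
def m2 : Fin 24 → ℤ := -(Pi.single 20 1) - Pi.single 22 1 - Pi.single 23 1

lemma MB_add_left (x y z : Fin 24 → ℤ) : MB (x + y) z = MB x z + MB y z := by
  simp only [MB, Pi.add_apply, ← Finset.sum_add_distrib]
  refine Finset.sum_congr rfl fun i _ => Finset.sum_congr rfl fun j _ => ?_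
  ring

lemma MB_smul_left (c : ℤ) (x y : Fin 24 → ℤ) : MB (c • x) y = c * MB x y := by
  simp only [MB, Finset.mul_sum]
  refine Finset.sum_congr rfl fun i _ => Finset.sum_congr rfl fun j _ => ?_
  simp only [Pi.smul_apply, smul_eq_mul]; ring

/-- The saturation of a submodule. -/
def sat {R M : Type*} [CommRing R] [IsDomain R] [AddCommGroup M] [Module R M]
    (N : Submodule R M) : Submodule R M where
  carrier := {x | ∃ n : R, n ≠ 0 ∧ n • x ∈ N}
  add_mem' := by
    rintro x y ⟨n, hn, hx⟩ ⟨m, hm, hy⟩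
    refine ⟨n * m, mul_ne_zero hn hm, ?_⟩
    have h1 : (n * m) • (x + y) = m • (n • x) + n • (m • y) := by
      rw [smul_add, mul_comm n m, mul_smul, mul_smul, smul_comm m n y]
    rw [h1]
    exact N.add_mem (N.smul_mem m hx) (N.smul_mem n hy)
  zero_mem' := ⟨1, one_ne_zero, by simp⟩
  smul_mem' := by
    rintro c x ⟨n, hn, hx⟩
    exact ⟨n, hn, by rw [smul_comm]; exact N.smul_mem c hx⟩

/-- Isometries of the Mukai lattice `Λ̃`. -/
def IsIsomM (g : (Fin 24 → ℤ) ≃ₗ[ℤ] (Fin 24 → ℤ)) : Prop := ∀ x y, MB (g x) (g y) = MB x y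

end
/-- The Noether–Lefschetz vector `v_d ∈ Λ̃`: for `d ≡ 0 (mod 6)` it is `e₁ - (d/6) f₁`, and
for `d ≡ 2 (mod 6)` it is `3(e₁ - ((d-2)/6) f₁) + μ₁ - μ₂`. -/
def vdM (d : ℤ) : Fin 24 → ℤ :=
  if d % 6 = 0 then Pi.single 16 1 - (d / 6) • Pi.single 17 1
  else (3 : ℤ) • (Pi.single 16 1 - ((d - 2) / 6) • Pi.single 17 1) + m1 - m2

/-- `L_d`, the saturation of `ℤλ₁ + ℤλ₂ + ℤv_d` in `Λ̃`. -/
def LdSub (d : ℤ) : Submodule ℤ (Fin 24 → ℤ) :=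
  sat (Submodule.span ℤ ({l1, l2, vdM d} : Set (Fin 24 → ℤ)))

/-!
Write `d = 6k + 2ε` with `ε ∈ {0, 1}` and `M = 3k + ε² = d/2`. In the basis `λ₁, λ₂, g` of `L_d`,
where `g = v_d` if `ε = 0` and `g = (v_d + λ₂ - λ₁)/3` if `ε = 1`, the lattice `L_d` is `ℤ³` with
Gram matrix `[[2, -1, -ε], [-1, 2, ε], [-ε, ε, -2k]]`.

If `x = (p, q, r)` and `y = (s, t, u)` span a hyperbolic plane, the vectors
`X = (p - 2q - εr, 2p - q - εr)` and `Y = (s - 2t - εu, 2s - t - εu)` satisfy `φ(X) = M r²`,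
`φ(Y) = M u²` and `β(X, Y) = 3 + 2Mru`, where `φ(a, b) = a² - ab + b²` and `β` is its polarisation.
The Lagrange identity for `φ` then gives `c² + 3 = 4M(-ru)` with `c = det(X, Y)`, so
`M a² + c ab - ru b²` is a positive form of discriminant `-3`; by reduction it is equivalent to `φ`,
which therefore primitively represents `M`.

Conversely, if `φ(a, b) = M` with `a, b` coprime, then after a sign change `a + b ≡ ε (mod 3)` and
there is an isotropic `x ∈ L_d` with `(x.λ₁, x.λ₂) = (a, -b)`; by coprimality some `z ∈ L_d` has
`(x.z) = 1`, and as `L_d` is even, `z - ((z.z)/2) x` completes `x` to a hyperbolic pair.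
-/

open Submodule Set

def IsPrimitiveEisensteinNorm (M : ℤ) : Prop :=
  ∃ a b : ℤ, IsCoprime a b ∧ a ^ 2 - a * b + b ^ 2 = M

theorem exists_abs_sub_two_mul_le {A : ℤ} (hA : 0 < A) (B : ℤ) : ∃ t, |B - 2 * A * t| ≤ A := by
  refine ⟨(B + A) / (2 * A), abs_le.2 ⟨?_, ?_⟩⟩ <;>
  · have := Int.emod_nonneg (B + A) (by omega : 2 * A ≠ 0)
    have := Int.emod_lt_of_pos (B + A) (by omega : 0 < 2 * A)
    have := Int.mul_ediv_add_emod (B + A) (2 * A)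
    linarith

/-- Reduction of positive binary forms of discriminant `-3`: the substitution `x ↦ x + ty`
achieves `|B| ≤ A`; then either `C < A` and swapping `x, y` lowers `A`, or the form is reduced,
which forces `A = C = 1`, `B = ±1`. -/
theorem isPrimitiveEisensteinNorm_of_disc (A B C : ℤ) (hdisc : B ^ 2 - 4 * A * C = -3)
    (hA : 0 < A) {x y : ℤ} (hxy : IsCoprime x y) :
    IsPrimitiveEisensteinNorm (A * x ^ 2 + B * x * y + C * y ^ 2) := by
  obtain ⟨t, ht⟩ := exists_abs_sub_two_mul_le hA B
  have hcop : IsCoprime (x + y * t) y := hxy.add_mul_left_left t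
  have hdisc' : (B - 2 * A * t) ^ 2 - 4 * A * (A * t ^ 2 - B * t + C) = -3 := by
    linear_combination hdisc
  rw [show A * x ^ 2 + B * x * y + C * y ^ 2 = A * (x + y * t) ^ 2
      + (B - 2 * A * t) * (x + y * t) * y + (A * t ^ 2 - B * t + C) * y ^ 2 by ring]
  generalize x + y * t = X, B - 2 * A * t = B', A * t ^ 2 - B * t + C = C' at *
  rcases le_or_gt A C' with hAC | hCA
  · have hB' : B' ^ 2 ≤ A ^ 2 := sq_le_sq' (abs_le.1 ht).1 (abs_le.1 ht).2
    have hA1 : A = 1 := by nlinarith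
    have hC1 : C' = 1 := by nlinarith
    have hB1 : B' ^ 2 = 1 := by nlinarith
    refine ⟨X, -B' * y, IsCoprime.mul_right ⟨0, -B', by linear_combination hB1⟩ hcop, ?_⟩
    rw [hA1, hC1]
    linear_combination y ^ 2 * hB1
  · have hC' : 0 < C' := by nlinarith
    have := isPrimitiveEisensteinNorm_of_disc C' (-B') A (by linear_combination hdisc') hC'
      hcop.symm.neg_right
    rwa [show C' * y ^ 2 + -B' * y * -X + A * (-X) ^ 2 = A * X ^ 2 + B' * X * y + C' * y ^ 2 by
      ring] at this
termination_by A.toNat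
decreasing_by omega

theorem isPrimitiveEisensteinNorm_of_sq_add_three {M c m : ℤ} (hM : 0 < M)
    (h : c ^ 2 + 3 = 4 * M * m) : IsPrimitiveEisensteinNorm M := by
  simpa using isPrimitiveEisensteinNorm_of_disc M c m (by linear_combination h) hM
    (isCoprime_one_left : IsCoprime 1 (0 : ℤ))

/-- By the Lagrange identity `β(X, Y)² - 4 φ(X) φ(Y) = -3 det(X, Y)²` for `φ(a, b) = a² - ab + b²`
and its polarisation `β`. -/
theorem sq_add_three_eq_of_polar {A B A' B' M r u : ℤ} (hX : A ^ 2 - A * B + B ^ 2 = M * r ^ 2)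
    (hY : A' ^ 2 - A' * B' + B' ^ 2 = M * u ^ 2)
    (hXY : 2 * A * A' - A * B' - B * A' + 2 * B * B' = 3 + 2 * M * r * u) :
    (A * B' - A' * B) ^ 2 + 3 = 4 * M * -(r * u) := by
  refine mul_left_cancel₀ (show (3 : ℤ) ≠ 0 by norm_num) ?_
  linear_combination 4 * (A' ^ 2 - A' * B' + B' ^ 2) * hX + 4 * M * r ^ 2 * hY
    - (2 * A * A' - A * B' - B * A' + 2 * B * B' + 3 + 2 * M * r * u) * hXY

theorem exists_isotropic_pair_of_even {R M : Type*} [CommRing R] [AddCommGroup M] [Module R M]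
    {B : LinearMap.BilinForm R M} (hB : B.IsSymm) {x z : M} (hx : B x x = 0) (hxz : B x z = 1)
    (hz : Even (B z z)) : ∃ y, B y y = 0 ∧ B x y = 1 := by
  obtain ⟨k, hk⟩ := hz
  refine ⟨z - k • x, ?_, ?_⟩ <;>
  · simp only [map_sub, LinearMap.sub_apply, LinearMap.BilinForm.smul_left,
      LinearMap.BilinForm.smul_right, hx, hxz, hk, hB.eq z x]
    ring

section Saturation

variable {R : Type*} [CommRing R] [IsDomain R]

theorem le_sat {M : Type*} [AddCommGroup M] [Module R M] (N : Submodule R M) : N ≤ sat N :=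
  fun _ hx => ⟨1, one_ne_zero, by rwa [one_smul]⟩

theorem sat_mono {M : Type*} [AddCommGroup M] [Module R M] {N N' : Submodule R M} (h : N ≤ N') :
    sat N ≤ sat N' :=
  fun _ ⟨c, hc, hx⟩ => ⟨c, hc, h hx⟩

theorem sat_span_range_eq_self {ι κ : Type*} [Fintype κ] [DecidableEq κ] (u : κ → ι → R)
    (idx : κ → ι) (hu : ∀ a b, u a (idx b) = if a = b then 1 else 0) :
    sat (span R (range u)) = span R (range u) := by
  refine le_antisymm (fun x ⟨c, hc, hcx⟩ => ?_) (le_sat _)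
  obtain ⟨w, hw⟩ := (mem_span_range_iff_exists_fun R).1 hcx
  have hw_coord : ∀ b, w b = c * x (idx b) := fun b => by
    simpa [Finset.sum_apply, hu] using congr_fun hw (idx b)
  have hx : x = ∑ b, x (idx b) • u b := smul_right_injective _ hc <| by
    simp only [← hw, Finset.smul_sum, smul_smul, hw_coord]
  rw [hx]
  exact sum_mem fun b _ => smul_mem _ _ (subset_span ⟨b, rfl⟩)

end Saturation

section Gram

def ldGram (k ε : ℤ) : Matrix (Fin 3) (Fin 3) ℤ := !![2, -1, -ε; -1, 2, ε; -ε, ε, -2 * k]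

def ldForm (k ε : ℤ) : LinearMap.BilinForm ℤ (Fin 3 → ℤ) := Matrix.toLinearMap₂' ℤ (ldGram k ε)

variable (k ε : ℤ)

theorem ldForm_apply (x y : Fin 3 → ℤ) :
    ldForm k ε x y = 2 * x 0 * y 0 - x 0 * y 1 - x 1 * y 0 + 2 * x 1 * y 1
      - ε * (x 0 * y 2 + x 2 * y 0) + ε * (x 1 * y 2 + x 2 * y 1) - 2 * k * x 2 * y 2 := by
  simp only [ldForm, ldGram, Matrix.toLinearMap₂'_apply, Matrix.of_apply, Matrix.cons_val,
    Fin.sum_univ_three, smul_eq_mul]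
  ring

theorem ldForm_apply_self (x : Fin 3 → ℤ) :
    ldForm k ε x x = 2 * (x 0 ^ 2 - x 0 * x 1 + x 1 ^ 2 - ε * x 2 * (x 0 - x 1) - k * x 2 ^ 2) := by
  rw [ldForm_apply]; ring

theorem isSymm_ldForm : (ldForm k ε).IsSymm :=
  ⟨fun x y => by rw [ldForm_apply, ldForm_apply]; ring⟩

theorem isPrimitiveEisensteinNorm_of_ldForm (hM : 0 < 3 * k + ε ^ 2) {x y : Fin 3 → ℤ}
    (hxx : ldForm k ε x x = 0) (hyy : ldForm k ε y y = 0) (hxy : ldForm k ε x y = 1) :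
    IsPrimitiveEisensteinNorm (3 * k + ε ^ 2) := by
  rw [ldForm_apply_self, mul_eq_zero, or_iff_right two_ne_zero] at hxx hyy
  rw [ldForm_apply] at hxy
  refine isPrimitiveEisensteinNorm_of_sq_add_three hM (sq_add_three_eq_of_polar
    (A := x 0 - 2 * x 1 - ε * x 2) (B := 2 * x 0 - x 1 - ε * x 2)
    (A' := y 0 - 2 * y 1 - ε * y 2) (B' := 2 * y 0 - y 1 - ε * y 2) (r := x 2) (u := y 2)
    ?_ ?_ ?_)
  · linear_combination 3 * hxx
  · linear_combination 3 * hyy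
  · linear_combination 3 * hxy

theorem exists_coprime_three_dvd_add_sub {a b : ℤ} (hab : IsCoprime a b)
    (h : a ^ 2 - a * b + b ^ 2 = 3 * k + ε ^ 2) :
    ∃ a b : ℤ, IsCoprime a b ∧ a ^ 2 - a * b + b ^ 2 = 3 * k + ε ^ 2 ∧ 3 ∣ a + b - ε := by
  have : (3 : ℤ) ∣ (a + b - ε) * (a + b + ε) := ⟨a * b + k, by linear_combination h⟩
  rcases Int.prime_three.dvd_mul.1 this with h3 | ⟨c, hc⟩
  · exact ⟨a, b, hab, h, h3⟩
  · exact ⟨-a, -b, hab.neg_neg, by linear_combination h, -c, by linear_combination -hc⟩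

theorem exists_ldForm_hyperbolic (h : IsPrimitiveEisensteinNorm (3 * k + ε ^ 2)) :
    ∃ x y, ldForm k ε x x = 0 ∧ ldForm k ε y y = 0 ∧ ldForm k ε x y = 1 := by
  obtain ⟨a₀, b₀, hab₀, h₀⟩ := h
  obtain ⟨a, b, ⟨s, t, hst⟩, h, w, hw⟩ := exists_coprime_three_dvd_add_sub k ε hab₀ h₀
  have hx : ldForm k ε ![a - w, w - b, 1] ![a - w, w - b, 1] = 0 := by
    rw [ldForm_apply_self]
    refine mul_left_cancel₀ (show (3 : ℤ) ≠ 0 by norm_num) ?_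
    simp only [Matrix.cons_val]
    linear_combination 2 * h + 2 * (2 * (a + b) - ε - 3 * w) * hw
  have hxz : ldForm k ε ![a - w, w - b, 1] ![s, -t, 0] = 1 := by
    rw [ldForm_apply]
    simp only [Matrix.cons_val]
    linear_combination hst + (s + t) * hw
  obtain ⟨y, hy, hxy⟩ := exists_isotropic_pair_of_even (isSymm_ldForm k ε) hx hxz
    (by rw [ldForm_apply_self]; exact even_two_mul _)
  exact ⟨_, y, hx, hy, hxy⟩

end Gram

section Mukai

theorem MB_add_right (x y z : Fin 24 → ℤ) : MB x (y + z) = MB x y + MB x z := by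
  simp only [MB, Pi.add_apply, mul_add, Finset.sum_add_distrib]

theorem MB_smul_right (c : ℤ) (x y : Fin 24 → ℤ) : MB x (c • y) = c * MB x y := by
  simp only [MB, Finset.mul_sum, Pi.smul_apply, smul_eq_mul]
  exact Finset.sum_congr rfl fun i _ => Finset.sum_congr rfl fun j _ => by ring

def mukaiForm : LinearMap.BilinForm ℤ (Fin 24 → ℤ) :=
  LinearMap.mk₂ ℤ MB MB_add_left MB_smul_left MB_add_right MB_smul_right

theorem mukaiForm_apply (x y : Fin 24 → ℤ) : mukaiForm x y = MB x y := rfl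

/-- `λ₁, λ₂, e₁, f₁, e₃ + f₄`. -/
def mukaiFrame : Fin 5 → Fin 24 → ℤ :=
  ![l1, l2, Pi.single 16 1, Pi.single 17 1, Pi.single 20 1 + Pi.single 23 1]

def mukaiFrameGram : Matrix (Fin 5) (Fin 5) ℤ :=
  !![2, -1, 0, 0, -1; -1, 2, 0, 0, 1; 0, 0, 0, 1, 0; 0, 0, 1, 0, 0; -1, 1, 0, 0, 0]

theorem mukaiForm_mukaiFrame (a b : Fin 5) :
    mukaiForm (mukaiFrame a) (mukaiFrame b) = mukaiFrameGram a b := by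
  revert b; fin_cases a <;> decide

def ldBasis (k ε : ℤ) : Fin 3 → Fin 24 → ℤ :=
  ![mukaiFrame 0, mukaiFrame 1, mukaiFrame 2 - k • mukaiFrame 3 + ε • mukaiFrame 4]

theorem mukaiForm_ldBasis (k ε : ℤ) (i j : Fin 3) :
    mukaiForm (ldBasis k ε i) (ldBasis k ε j) = ldGram k ε i j := by
  fin_cases i <;> fin_cases j <;>
    simp only [ldBasis, ldGram, mukaiFrameGram, Fin.zero_eta, Fin.mk_one, Fin.reduceFinMk,
      Matrix.cons_val_zero, Matrix.cons_val_one, Matrix.cons_val, Matrix.cons_val',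
      Matrix.cons_val_fin_one, Matrix.of_apply, map_add, map_sub, map_smul, LinearMap.add_apply,
      LinearMap.sub_apply, LinearMap.smul_apply, mukaiForm_mukaiFrame, smul_eq_mul] <;> ring

theorem mukaiForm_linearCombination_ldBasis (k ε : ℤ) (x y : Fin 3 → ℤ) :
    mukaiForm (Fintype.linearCombination ℤ (ldBasis k ε) x)
      (Fintype.linearCombination ℤ (ldBasis k ε) y) = ldForm k ε x y := by
  simp only [Fintype.linearCombination_apply, map_sum, map_smul, LinearMap.coe_sum,
    LinearMap.coe_smul, Finset.sum_apply, Pi.smul_apply, mukaiForm_ldBasis, smul_eq_mul,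
    Finset.mul_sum, ldForm, Matrix.toLinearMap₂'_apply]
  rw [Finset.sum_comm]
  exact Finset.sum_congr rfl fun i _ => Finset.sum_congr rfl fun j _ => by ring

theorem sat_span_ldBasis (k ε : ℤ) :
    sat (span ℤ (range (ldBasis k ε))) = span ℤ (range (ldBasis k ε)) := by
  refine sat_span_range_eq_self _ ![22, 21, 16] fun a b => ?_
  fin_cases a <;> fin_cases b <;> simp [ldBasis, mukaiFrame, l1, l2]

theorem vdM_eq (d : ℤ) (h6 : d % 6 = 0 ∨ d % 6 = 2) :
    vdM d = (1 + 2 * (d % 6 / 2)) • ldBasis (d / 6) (d % 6 / 2) 2 + (d % 6 / 2) • (l1 - l2) := by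
  rcases h6 with h | h
  · simp [vdM, h, ldBasis, mukaiFrame]
  · rw [vdM, if_neg (by omega), show (d - 2) / 6 = d / 6 by omega, show d % 6 / 2 = 1 by omega]
    simp only [ldBasis, mukaiFrame, m1, m2, l1, l2, Matrix.cons_val]
    module

theorem LdSub_eq_span (d : ℤ) (h6 : d % 6 = 0 ∨ d % 6 = 2) :
    LdSub d = span ℤ (range (ldBasis (d / 6) (d % 6 / 2))) := by
  have hv := vdM_eq d h6
  set b := ldBasis (d / 6) (d % 6 / 2)
  have hb : ∀ i, b i ∈ span ℤ (range b) := fun i => subset_span ⟨i, rfl⟩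
  refine le_antisymm ?_ (span_le.2 ?_)
  · rw [← sat_span_ldBasis]
    refine sat_mono (span_le.2 ?_)
    rintro _ (rfl | rfl | rfl)
    · exact hb 0
    · exact hb 1
    · rw [hv]; exact add_mem (smul_mem _ _ (hb 2)) (smul_mem _ _ (sub_mem (hb 0) (hb 1)))
  · have hl : ∀ v ∈ ({l1, l2, vdM d} : Set (Fin 24 → ℤ)), v ∈ LdSub d :=
      fun v hv => le_sat _ (subset_span hv)
    rintro _ ⟨i, rfl⟩
    fin_cases i
    · exact hl l1 (by simp)
    · exact hl l2 (by simp)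
    · refine ⟨1 + 2 * (d % 6 / 2), by omega, ?_⟩
      change (1 + 2 * (d % 6 / 2)) • b 2 ∈ _
      rw [show (1 + 2 * (d % 6 / 2)) • b 2 = vdM d - (d % 6 / 2) • (l1 - l2) by rw [hv]; abel]
      exact sub_mem (subset_span (by simp))
        (smul_mem _ _ (sub_mem (subset_span (by simp)) (subset_span (by simp))))

theorem exists_hyperbolic_LdSub_iff (d : ℤ) (h6 : d % 6 = 0 ∨ d % 6 = 2) :
    (∃ x y : Fin 24 → ℤ, x ∈ LdSub d ∧ y ∈ LdSub d ∧ MB x x = 0 ∧ MB y y = 0 ∧ MB x y = 1) ↔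
      ∃ x y, ldForm (d / 6) (d % 6 / 2) x x = 0 ∧ ldForm (d / 6) (d % 6 / 2) y y = 0 ∧
        ldForm (d / 6) (d % 6 / 2) x y = 1 := by
  simp only [LdSub_eq_span d h6, ← Fintype.range_linearCombination, LinearMap.mem_range,
    ← mukaiForm_apply]
  constructor
  · rintro ⟨_, _, ⟨x, rfl⟩, ⟨y, rfl⟩, h⟩
    exact ⟨x, y, by simpa only [mukaiForm_linearCombination_ldBasis] using h⟩
  · rintro ⟨x, y, h⟩
    exact ⟨_, _, ⟨x, rfl⟩, ⟨y, rfl⟩, by simpa only [mukaiForm_linearCombination_ldBasis] using h⟩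

end Mukai

/-- For a positive integer `d ≡ 0` or `2 (mod 6)`, the lattice `L_d` contains a
copy of the hyperbolic plane `U` iff `d` is primitively represented by `A₂`, i.e.
`2(a² - ab + b²) = d` for some coprime integers `a, b`. -/
theorem stmt_9 (d : ℤ) (hd : 0 < d) (h6 : d % 6 = 0 ∨ d % 6 = 2) :
    (∃ x y : Fin 24 → ℤ, x ∈ LdSub d ∧ y ∈ LdSub d ∧
      MB x x = 0 ∧ MB y y = 0 ∧ MB x y = 1) ↔
    (∃ a b : ℤ, IsCoprime a b ∧ 2 * (a ^ 2 - a * b + b ^ 2) = d) := by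
  have hdk : d = 2 * (3 * (d / 6) + (d % 6 / 2) ^ 2) := by
    rcases h6 with h | h <;> rw [h] <;> omega
  rw [exists_hyperbolic_LdSub_iff d h6]
  constructor
  · rintro ⟨x, y, hxx, hyy, hxy⟩
    obtain ⟨a, b, hab, h⟩ := isPrimitiveEisensteinNorm_of_ldForm _ _ (by omega) hxx hyy hxy
    exact ⟨a, b, hab, by omega⟩
  · rintro ⟨a, b, hab, h⟩
    exact exists_ldForm_hyperbolic _ _ ⟨a, b, hab, by omega⟩
end

section
/- Let v ∈ Γ be primitive and suppose that ℤh² + ℤv is not saturated in Γ̄, i.e. there exist x ∈ Γ̄ and a nonzero integer n with n·x ∈ ℤh² + ℤv but x ∉ ℤh² + ℤv. Then (v.w) ≡ 0 (mod 3) for all w ∈ Γ. -/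
/-!
Write `L = ℤh² + ℤv`. If `L` is not saturated, some prime `p` and `x ∈ Γ̄` satisfy
`p x = a h² + b v` with `p ∤ gcd(a, b)`. Pairing with `w ∈ Γ` gives `p (w.x) = b (v.w)`, and pairing
with `h²` gives `p (h².x) = -3a`. If `p ∤ 3`, then `p ∣ a`, hence `p ∤ b` and `p ∣ (v.w)` for all
`w ∈ Γ`; since `3u + (h².u) h² ∈ Γ` for every `u ∈ Γ̄`, `p` divides `(v.u)` for all `u ∈ Γ̄`, so
`p ∣ v` by unimodularity of `Γ̄`, contradicting primitivity. Hence `p = ±3`; reading off the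
coordinate at which `h²` is `1` shows `3 ∤ b`, and `3 ∣ b (v.w)` gives the claim.
-/

open scoped BigOperators

noncomputable section

/-- The Gram matrix of the cubic lattice `Γ̄ = E₈(-1)² ⊕ U² ⊕ I₀,₃` on `ℤ²³`. -/
def gramC : Fin 23 → Fin 23 → ℤ := fun i j =>
  if i.val < 8 ∧ j.val < 8 then
    E8M ⟨i.val % 8, Nat.mod_lt _ (by norm_num)⟩ ⟨j.val % 8, Nat.mod_lt _ (by norm_num)⟩
  else if 8 ≤ i.val ∧ i.val < 16 ∧ 8 ≤ j.val ∧ j.val < 16 then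
    E8M ⟨(i.val - 8) % 8, Nat.mod_lt _ (by norm_num)⟩ ⟨(j.val - 8) % 8, Nat.mod_lt _ (by norm_num)⟩
  else if (i.val = 16 ∧ j.val = 17) ∨ (i.val = 17 ∧ j.val = 16) ∨
      (i.val = 18 ∧ j.val = 19) ∨ (i.val = 19 ∧ j.val = 18) then 1
  else if 20 ≤ i.val ∧ i = j then -1
  else 0

/-- The bilinear form of the cubic lattice `Γ̄`. -/
def GB (x y : Fin 23 → ℤ) : ℤ := ∑ i, ∑ j, gramC i j * x i * y j

/-- The class `h² = (0,…,0,1,1,1)`. -/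
def h2 : Fin 23 → ℤ := Pi.single 20 1 + Pi.single 21 1 + Pi.single 22 1

/-- A vector is primitive if it is not `m • w` with `|m| ≥ 2`. -/
def PrimitiveC (v : Fin 23 → ℤ) : Prop :=
  ¬ ∃ (m : ℤ) (w : Fin 23 → ℤ), 2 ≤ |m| ∧ v = m • w

/-- Membership in `Γ = (h²)^⊥ ⊂ Γ̄`. -/
def inGamma (x : Fin 23 → ℤ) : Prop := GB h2 x = 0

lemma GB_add_right (x y z : Fin 23 → ℤ) : GB x (y + z) = GB x y + GB x z := by
  simp [GB, Pi.add_apply, mul_add, Finset.sum_add_distrib]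

lemma GB_smul_right (c : ℤ) (x y : Fin 23 → ℤ) : GB x (c • y) = c * GB x y := by
  simp only [GB, Finset.mul_sum]
  refine Finset.sum_congr rfl fun i _ => Finset.sum_congr rfl fun j _ => ?_
  simp only [Pi.smul_apply, smul_eq_mul]; ring

/-- `Γ = (h²)^⊥` as a submodule of `ℤ²³`. -/
def Gamma : Submodule ℤ (Fin 23 → ℤ) where
  carrier := {x | GB h2 x = 0}
  add_mem' := by
    intro a b ha hb
    simp only [Set.mem_setOf_eq] at *
    rw [GB_add_right, ha, hb, add_zero]
  zero_mem' := by simp [GB]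
  smul_mem' := by
    intro c x hx
    simp only [Set.mem_setOf_eq] at *
    rw [GB_smul_right, hx, mul_zero]

/-- The saturation `K_v` of `ℤh² + ℤv` in `Γ̄`. -/
def Kv (v : Fin 23 → ℤ) : Submodule ℤ (Fin 23 → ℤ) :=
  sat (Submodule.span ℤ ({h2, v} : Set (Fin 23 → ℤ)))

/-- `d` is the discriminant of `K_v`: some ℤ-basis of `K_v` has Gram determinant `d`. -/
def discIs (v : Fin 23 → ℤ) (d : ℤ) : Prop :=
  ∃ x y : Fin 23 → ℤ, Kv v = Submodule.span ℤ ({x, y} : Set (Fin 23 → ℤ)) ∧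
    d = GB x x * GB y y - GB x y * GB y x

/-- The index of `ℤh² + ℤv` in its saturation `K_v`. -/
def idx (v : Fin 23 → ℤ) : ℕ :=
  (Submodule.span ℤ ({h2, v} : Set (Fin 23 → ℤ))).toAddSubgroup.relIndex
    (Kv v).toAddSubgroup

/-- Isometries of the cubic lattice `Γ̄`. -/
def IsIsomC (g : (Fin 23 → ℤ) ≃ₗ[ℤ] (Fin 23 → ℤ)) : Prop := ∀ x y, GB (g x) (g y) = GB x y

end

section Saturation

variable {R M : Type*} [CommRing R] [UniqueFactorizationMonoid R]
  [AddCommGroup M] [Module R M]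

theorem Submodule.exists_prime_smul_mem_notMem (N : Submodule R M) {n : R} (hn : n ≠ 0) {x : M}
    (hnx : n • x ∈ N) (hx : x ∉ N) : ∃ (p : R) (y : M), Prime p ∧ p • y ∈ N ∧ y ∉ N := by
  induction n using UniqueFactorizationMonoid.induction_on_prime generalizing x with
  | h₁ => exact absurd rfl hn
  | h₂ u hu =>
    refine absurd ?_ hx
    simpa [← smul_assoc] using N.smul_mem (↑hu.unit⁻¹ : R) hnx
  | h₃ a p ha hp ih =>
    by_cases hax : a • x ∈ N
    · exact ih ha hax hx
    · exact ⟨p, a • x, hp, by rwa [smul_smul], hax⟩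

theorem exists_prime_smul_eq_of_not_saturated [IsDomain R] [Module.IsTorsionFree R M] {e f : M}
    (h : ∃ x : M, (∃ n : R, n ≠ 0 ∧ n • x ∈ Submodule.span R {e, f}) ∧
      x ∉ Submodule.span R {e, f}) :
    ∃ (p a b : R) (x : M), Prime p ∧ p • x = a • e + b • f ∧ ¬ (p ∣ a ∧ p ∣ b) := by
  obtain ⟨x₀, ⟨n, hn, hnx⟩, hx₀⟩ := h
  obtain ⟨p, x, hp, hpx, hx⟩ := Submodule.exists_prime_smul_mem_notMem _ hn hnx hx₀
  obtain ⟨a, b, hab⟩ := Submodule.mem_span_pair.mp hpx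
  refine ⟨p, a, b, x, hp, hab.symm, ?_⟩
  rintro ⟨⟨a', rfl⟩, ⟨b', rfl⟩⟩
  refine hx (Submodule.mem_span_pair.mpr ⟨a', b', smul_right_injective M hp.ne_zero ?_⟩)
  simp only [← hab, smul_add, smul_smul]

end Saturation

section CubicLattice

/-- The inverse of the `E₈` Cartan matrix. -/
def cartanE₈Inv : Matrix (Fin 8) (Fin 8) ℤ :=
  !![4, 5, 7, 10, 8, 6, 4, 2;
    5, 8, 10, 15, 12, 9, 6, 3;
    7, 10, 14, 20, 16, 12, 8, 4;
    10, 15, 20, 30, 24, 18, 12, 6;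
    8, 12, 16, 24, 20, 15, 10, 5;
    6, 9, 12, 18, 15, 12, 8, 4;
    4, 6, 8, 12, 10, 8, 6, 3;
    2, 3, 4, 6, 5, 4, 3, 2]

/-- The inverse of `gramC`: blockwise, since the blocks `U` and `⟨-1⟩` are their own inverses. -/
def gramCInv (i j : Fin 23) : ℤ :=
  if (i.val < 8 ∧ j.val < 8) ∨ (8 ≤ i.val ∧ i.val < 16 ∧ 8 ≤ j.val ∧ j.val < 16) then
    -cartanE₈Inv ⟨i.val % 8, Nat.mod_lt _ (by norm_num)⟩ ⟨j.val % 8, Nat.mod_lt _ (by norm_num)⟩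
  else gramC i j

theorem gramC_mul_gramCInv : ∀ i k : Fin 23,
    ∑ j, gramC i j * gramCInv j k = if i = k then 1 else 0 := by
  decide

theorem gramC_symm : ∀ i j : Fin 23, gramC i j = gramC j i := by
  decide

theorem GB_comm (x y : Fin 23 → ℤ) : GB x y = GB y x := by
  rw [GB, Finset.sum_comm]
  exact Finset.sum_congr rfl fun i _ => Finset.sum_congr rfl fun j _ => by
    rw [gramC_symm]; ring

theorem GB_h2_h2 : GB h2 h2 = -3 := by
  decide

theorem GB_gramCInv_col (v : Fin 23 → ℤ) (k : Fin 23) : GB v (gramCInv · k) = v k := by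
  calc GB v (gramCInv · k) = ∑ i, v i * ∑ j, gramC i j * gramCInv j k := by
        simp only [GB, Finset.mul_sum]
        exact Finset.sum_congr rfl fun i _ => Finset.sum_congr rfl fun j _ => by ring
    _ = v k := by simp [gramC_mul_gramCInv]

theorem dvd_apply_of_forall_dvd_GB {p : ℤ} {v : Fin 23 → ℤ} (h : ∀ u, p ∣ GB v u) (k : Fin 23) :
    p ∣ v k :=
  GB_gramCInv_col v k ▸ h _

theorem inGamma_three_smul_add (u : Fin 23 → ℤ) : inGamma ((3 : ℤ) • u + GB h2 u • h2) := by
  rw [inGamma, GB_add_right, GB_smul_right, GB_smul_right, GB_h2_h2]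
  ring

theorem PrimitiveC.not_forall_prime_dvd {v : Fin 23 → ℤ} (hv : PrimitiveC v) {p : ℤ}
    (hp : Prime p) : ¬ ∀ k, p ∣ v k := by
  intro hdvd
  refine hv ⟨p, fun k => v k / p, ?_, funext fun k => (Int.mul_ediv_cancel' (hdvd k)).symm⟩
  rw [Int.abs_eq_natAbs]
  exact_mod_cast (Int.prime_iff_natAbs_prime.mp hp).two_le

end CubicLattice

section NonSaturated

variable {v x : Fin 23 → ℤ} {p a b : ℤ}

theorem mul_GB_eq_of_smul_eq (hx : p • x = a • h2 + b • v) {u : Fin 23 → ℤ}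
    (hu : inGamma u) : p * GB u x = b * GB v u := by
  have h := congrArg (GB u) hx
  rw [GB_add_right, GB_smul_right, GB_smul_right, GB_smul_right, GB_comm u h2, hu,
    GB_comm u v] at h
  linarith

theorem mul_GB_h2_eq_of_smul_eq (hvG : inGamma v) (hx : p • x = a • h2 + b • v) :
    p * GB h2 x = -3 * a := by
  have h := congrArg (GB h2) hx
  rw [GB_add_right, GB_smul_right, GB_smul_right, GB_smul_right, GB_h2_h2, hvG] at h
  linarith

theorem prime_dvd_three_of_smul_eq (hvG : inGamma v) (hv : PrimitiveC v) (hp : Prime p)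
    (hx : p • x = a • h2 + b • v) (hab : ¬ (p ∣ a ∧ p ∣ b)) : p ∣ 3 := by
  by_contra hp3
  have hpa : p ∣ a := by
    have h : p ∣ -3 * a := ⟨_, (mul_GB_h2_eq_of_smul_eq hvG hx).symm⟩
    exact (hp.dvd_mul.mp h).resolve_left (fun h3 => hp3 (dvd_neg.mp h3))
  have hpb : ¬ p ∣ b := fun hpb => hab ⟨hpa, hpb⟩
  have hGamma : ∀ u, inGamma u → p ∣ GB v u := fun u hu =>
    (hp.dvd_mul.mp ⟨_, (mul_GB_eq_of_smul_eq hx hu).symm⟩).resolve_left hpb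
  have hall : ∀ u, p ∣ GB v u := by
    intro u
    have h := hGamma _ (inGamma_three_smul_add u)
    rw [GB_add_right, GB_smul_right, GB_smul_right, GB_comm v h2, hvG, mul_zero, add_zero] at h
    exact (hp.dvd_mul.mp h).resolve_left hp3
  exact hv.not_forall_prime_dvd hp (dvd_apply_of_forall_dvd_GB hall)

theorem three_dvd_GB_of_smul_eq (hp : Prime p) (hp3 : p ∣ 3)
    (hx : p • x = a • h2 + b • v) (hab : ¬ (p ∣ a ∧ p ∣ b)) {w : Fin 23 → ℤ} (hw : inGamma w) :
    3 ∣ GB v w := by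
  have h3p : (3 : ℤ) ∣ p := (hp.associated_of_dvd Int.prime_three hp3).symm.dvd
  have h3b : ¬ 3 ∣ b := by
    intro h3b
    have hpb : p ∣ b := hp3.trans h3b
    refine hab ⟨?_, hpb⟩
    have h20 : p * x 20 = a + b * v 20 := by simpa [h2] using congrFun hx 20
    rw [show a = p * x 20 - b * v 20 by linarith]
    exact dvd_sub (dvd_mul_right _ _) (hpb.mul_right _)
  have h : 3 ∣ b * GB v w := mul_GB_eq_of_smul_eq hx hw ▸ h3p.mul_right _
  exact (Int.prime_three.dvd_mul.mp h).resolve_left h3b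

end NonSaturated

/-- If `v ∈ Γ` is primitive and `ℤh² + ℤv` is not saturated in `Γ̄`, then
`(v.w) ≡ 0 (mod 3)` for all `w ∈ Γ`. -/
theorem stmt_14 (v : Fin 23 → ℤ) (hvG : inGamma v) (hv : PrimitiveC v)
    (hns : ∃ x : Fin 23 → ℤ,
      (∃ n : ℤ, n ≠ 0 ∧ n • x ∈ Submodule.span ℤ ({h2, v} : Set (Fin 23 → ℤ))) ∧
      x ∉ Submodule.span ℤ ({h2, v} : Set (Fin 23 → ℤ))) :
    ∀ w : Fin 23 → ℤ, inGamma w → (3 : ℤ) ∣ GB v w := by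
  intro w hw
  obtain ⟨p, a, b, x, hp, hx, hab⟩ := exists_prime_smul_eq_of_not_saturated hns
  exact three_dvd_GB_of_smul_eq hp (prime_dvd_three_of_smul_eq hvG hv hp hx hab) hx hab hw
end
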